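/- arXiv:1902.04054 — 6 statements merged into one kernel-verified Lean document; each statement's English description precedes it below -/
import Mathlib

section
/- Let U be a nonnegative real-valued random variable and C > 0, q > 0. If lim_{t→∞} t^q · P(U > t) = C, then for every p > 0 one has lim_{λ→∞} λ^{p+q} · E[U^{-p} exp(-λ/U)] = (q/(p+q)) · C · Γ(p+q+1). -/
open MeasureTheory ProbabilityTheory Filter Set

lemma aux_int (r : ℝ) (hr : -1 < r) :
    IntegrableOn (fun s : ℝ => s ^ r * Real.exp (-s)) (Set.Ioi 0) := by
  have h := Real.GammaIntegral_convergent (show (0:ℝ) < r + 1 by linarith)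
  simpa [mul_comm, add_sub_cancel_right] using h

lemma aux_k_int (p : ℝ) (hp : 0 < p) :
    IntegrableOn (fun s : ℝ => (s ^ p - p * s ^ (p - 1)) * Real.exp (-s)) (Set.Ioi 0) := by
  have h1 := aux_int p (by linarith)
  have h2 := (aux_int (p - 1) (by linarith)).const_mul p
  have h := h1.sub h2
  refine h.congr (Filter.Eventually.of_forall fun s => by simp [Pi.sub_apply]; ring)

lemma aux_ftc (p : ℝ) (hp : 0 < p) (x : ℝ) (hx : 0 < x) :
    ∫ s in Set.Ioi x, (s ^ p - p * s ^ (p - 1)) * Real.exp (-s)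
      = x ^ p * Real.exp (-x) := by
  have h := integral_Ioi_of_hasDerivAt_of_tendsto' (a := x)
      (f := fun s => -(s ^ p * Real.exp (-s)))
      (f' := fun s => (s ^ p - p * s ^ (p - 1)) * Real.exp (-s))
      (m := 0) ?_ ?_ ?_
  · rw [h]; ring
  · intro s hs
    have hs0 : (0:ℝ) < s := lt_of_lt_of_le hx hs
    have h1 : HasDerivAt (fun s : ℝ => s ^ p) (p * s ^ (p - 1)) s :=
      Real.hasDerivAt_rpow_const (Or.inl (ne_of_gt hs0))
    have h2 : HasDerivAt (fun s : ℝ => Real.exp (-s)) (-Real.exp (-s)) s := by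
      simpa [Function.comp_def] using (Real.hasDerivAt_exp (-s)).comp s (hasDerivAt_neg s)
    have := (h1.mul h2).neg
    convert this using 1
    · rfl
    · ring
  · exact (aux_k_int p hp).mono_set (Set.Ioi_subset_Ioi hx.le)
  · have h := tendsto_rpow_mul_exp_neg_mul_atTop_nhds_zero p 1 one_pos
    simp only [neg_mul, one_mul] at h
    simpa using h.neg

/-- If `t^q · P(U > t) → C` as `t → ∞`, then for every `p > 0`,
`λ^{p+q} · E[U^{-p} exp(-λ/U)] → (q/(p+q)) · C · Γ(p+q+1)` as `λ → ∞`,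
where `U^{-p} exp(-λ/U) := 0` on `{U = 0}`. -/
theorem stmt_1 {Ω : Type*} [MeasureSpace Ω] [IsProbabilityMeasure (ℙ : Measure Ω)]
    (U : Ω → ℝ) (hUmeas : Measurable U) (hUnn : ∀ ω, 0 ≤ U ω)
    (C q : ℝ) (hC : 0 < C) (hq : 0 < q)
    (htail : Tendsto (fun t : ℝ => t ^ q * (ℙ {ω | U ω > t}).toReal) atTop (nhds C)) :
    ∀ p : ℝ, 0 < p →
      Tendsto
        (fun lam : ℝ =>
          lam ^ (p + q) *
            ∫ ω, (if U ω = 0 then 0 else U ω ^ (-p) * Real.exp (-(lam / U ω))))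
        atTop (nhds (q / (p + q) * (C * Real.Gamma (p + q + 1)))) := by
  intro p hp
  have hpq : 0 < p + q := by linarith
  set k : ℝ → ℝ := fun s => (s ^ p - p * s ^ (p - 1)) * Real.exp (-s) with hk
  have hkmeas : Measurable k := by
    apply Measurable.mul _ (Real.measurable_exp.comp measurable_neg)
    exact (measurable_id.pow_const _).sub ((measurable_id.pow_const _).const_mul p)
  -- the measurability of s ↦ (ℙ {U ω > lam / s}).toReal
  have hPmeas : ∀ lam : ℝ, Measurable (fun t : ℝ => (ℙ {ω | U ω > t}).toReal) := by
    intro lam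
    apply ENNReal.measurable_toReal.comp
    apply Antitone.measurable
    intro t t' h
    exact measure_mono (fun ω hω => lt_of_le_of_lt h hω)
  -- key identity
  have key : ∀ lam : ℝ, 0 < lam →
      lam ^ (p + q) * (∫ ω, (if U ω = 0 then 0 else U ω ^ (-p) * Real.exp (-(lam / U ω))))
        = ∫ s in Set.Ioi (0:ℝ), k s * (lam ^ q * (ℙ {ω | U ω > lam / s}).toReal) := by
    intro lam hlam
    set F : Ω → ℝ → ℝ := fun ω s => if lam / s < U ω then lam ^ q * k s else 0 with hF
    -- pointwise identity
    have point : ∀ ω, lam ^ (p + q) * (if U ω = 0 then 0 else U ω ^ (-p) * Real.exp (-(lam / U ω)))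
        = ∫ s in Set.Ioi (0:ℝ), F ω s := by
      intro ω
      by_cases h0 : U ω = 0
      · rw [if_pos h0, mul_zero]
        symm
        have hzero : Set.EqOn (F ω) (fun _ => (0:ℝ)) (Set.Ioi 0) := by
          intro s hs
          have hs0 : (0:ℝ) < s := hs
          simp only [hF, h0]
          rw [if_neg (not_lt.mpr (div_nonneg hlam.le hs0.le))]
        rw [setIntegral_congr_fun measurableSet_Ioi hzero]
        simp
      · have hu : 0 < U ω := lt_of_le_of_ne (hUnn ω) (Ne.symm h0)
        rw [if_neg h0]
        have hx : 0 < lam / U ω := div_pos hlam hu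
        have hset : Set.EqOn (F ω)
            ((Set.Ioi (lam / U ω)).indicator (fun s => lam ^ q * k s)) (Set.Ioi 0) := by
          intro s hs
          have hs0 : (0:ℝ) < s := hs
          have hiff : lam / s < U ω ↔ lam / U ω < s := by
            rw [div_lt_iff₀ hs0, div_lt_iff₀ hu, mul_comm]
          simp only [hF, Set.indicator_apply, Set.mem_Ioi]
          exact if_congr hiff rfl rfl
        rw [setIntegral_congr_fun measurableSet_Ioi hset, integral_indicator measurableSet_Ioi,
            Measure.restrict_restrict measurableSet_Ioi, Set.Ioi_inter_Ioi,
            sup_of_le_left hx.le, integral_const_mul, aux_ftc p hp _ hx]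
        rw [Real.div_rpow hlam.le (hUnn ω), Real.rpow_neg (hUnn ω), Real.rpow_add hlam]
        have hup : (0:ℝ) < U ω ^ p := Real.rpow_pos_of_pos hu p
        field_simp
    -- integrability on the product space
    have hmeasF : Measurable (Function.uncurry F) := by
      refine Measurable.ite ?_ ((hkmeas.comp measurable_snd).const_mul _) measurable_const
      exact measurableSet_lt (measurable_const.div measurable_snd) (hUmeas.comp measurable_fst)
    have hInt : Integrable (Function.uncurry F)
        ((ℙ : Measure Ω).prod (volume.restrict (Set.Ioi 0))) := by
      have hg : Integrable (fun x : Ω × ℝ => (1:ℝ) * (lam ^ q * |k x.2|))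
          ((ℙ : Measure Ω).prod (volume.restrict (Set.Ioi 0))) :=
        (integrable_const (1:ℝ)).mul_prod ((aux_k_int p hp).abs.const_mul _)
      refine hg.mono' hmeasF.aestronglyMeasurable ?_
      refine Eventually.of_forall fun x => ?_
      have hq0 : (0:ℝ) ≤ lam ^ q := Real.rpow_nonneg hlam.le q
      by_cases h : lam / x.2 < U x.1
      · simp only [Function.uncurry, hF, if_pos h, one_mul, Real.norm_eq_abs, abs_mul,
          abs_of_nonneg hq0]
        exact le_rfl
      · simp only [Function.uncurry, hF, if_neg h, one_mul, norm_zero]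
        positivity
    -- inner integral
    have inner : ∀ s ∈ Set.Ioi (0:ℝ),
        (∫ ω, F ω s) = k s * (lam ^ q * (ℙ {ω | U ω > lam / s}).toReal) := by
      intro s hs
      have hrepr : (fun ω => F ω s)
          = Set.indicator {ω | U ω > lam / s} (fun _ => lam ^ q * k s) := by
        funext ω
        simp only [hF, Set.indicator_apply, Set.mem_setOf_eq, gt_iff_lt]
      have hmeasset : MeasurableSet {ω | U ω > lam / s} := hUmeas measurableSet_Ioi
      rw [hrepr, integral_indicator_const _ hmeasset, smul_eq_mul, measureReal_def]
      ring
    calc lam ^ (p + q) * (∫ ω, (if U ω = 0 then 0 else U ω ^ (-p) * Real.exp (-(lam / U ω))))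
        = ∫ ω, lam ^ (p + q) * (if U ω = 0 then 0 else U ω ^ (-p) * Real.exp (-(lam / U ω))) :=
          (integral_const_mul _ _).symm
      _ = ∫ ω, ∫ s in Set.Ioi (0:ℝ), F ω s := by
          exact integral_congr_ae (Eventually.of_forall point)
      _ = ∫ s in Set.Ioi (0:ℝ), ∫ ω, F ω s := integral_integral_swap hInt
      _ = ∫ s in Set.Ioi (0:ℝ), k s * (lam ^ q * (ℙ {ω | U ω > lam / s}).toReal) :=
          setIntegral_congr_fun measurableSet_Ioi inner
  -- limit of the RHS
  have hlim : Tendsto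
      (fun lam : ℝ => ∫ s in Set.Ioi (0:ℝ), k s * (lam ^ q * (ℙ {ω | U ω > lam / s}).toReal))
      atTop (nhds (∫ s in Set.Ioi (0:ℝ), k s * (C * s ^ q))) := by
    obtain ⟨T₀, hT₀⟩ := eventually_atTop.mp (htail.eventually (eventually_le_nhds (lt_add_one C)))
    set T : ℝ := max T₀ 1 with hTdef
    have hT1 : (1:ℝ) ≤ T := le_max_right _ _
    have hTpos : (0:ℝ) < T := lt_of_lt_of_le one_pos hT1
    have hTtail : ∀ t : ℝ, T ≤ t → t ^ q * (ℙ {ω | U ω > t}).toReal ≤ C + 1 :=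
      fun t ht => hT₀ t (le_trans (le_max_left _ _) ht)
    set M : ℝ := C + 1 + T ^ q with hMdef
    have hM1 : C + 1 ≤ M := le_add_of_nonneg_right (Real.rpow_nonneg hTpos.le q)
    have hM2 : T ^ q ≤ M := by
      have h : (0:ℝ) ≤ C + 1 := by linarith
      linarith
    apply tendsto_integral_filter_of_dominated_convergence
        (bound := fun s => |k s| * (M * s ^ q))
    · -- measurability
      filter_upwards with lam
      have : Measurable fun s : ℝ => (ℙ {ω | U ω > lam / s}).toReal :=
        (hPmeas 0).comp (measurable_const.div measurable_id)
      exact (hkmeas.mul (this.const_mul _)).aestronglyMeasurable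
    · -- uniform bound
      filter_upwards [eventually_ge_atTop T] with lam hlamT
      have hlam0 : 0 < lam := lt_of_lt_of_le hTpos hlamT
      rw [ae_restrict_iff' measurableSet_Ioi]
      refine Eventually.of_forall fun s hs => ?_
      have hs0 : (0:ℝ) < s := hs
      set A : ℝ := (ℙ {ω | U ω > lam / s}).toReal with hA
      have hA0 : 0 ≤ A := ENNReal.toReal_nonneg
      have hA1 : A ≤ 1 := by
        simpa using ENNReal.toReal_mono ENNReal.one_ne_top prob_le_one
      have hsq : (0:ℝ) ≤ s ^ q := Real.rpow_nonneg hs0.le q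
      have hmain : lam ^ q * A ≤ M * s ^ q := by
        rcases le_or_gt T (lam / s) with hcase | hcase
        · have hmul : (lam / s) ^ q * s ^ q = lam ^ q := by
            rw [← Real.mul_rpow (div_nonneg hlam0.le hs0.le) hs0.le, div_mul_cancel₀ _ (ne_of_gt hs0)]
          have h1 := hTtail (lam / s) hcase
          calc lam ^ q * A = s ^ q * ((lam / s) ^ q * A) := by rw [← hmul]; ring
            _ ≤ s ^ q * (C + 1) := mul_le_mul_of_nonneg_left h1 hsq
            _ ≤ s ^ q * M := mul_le_mul_of_nonneg_left hM1 hsq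
            _ = M * s ^ q := mul_comm _ _
        · have hlt : lam < T * s := by
            rw [div_lt_iff₀ hs0] at hcase; linarith [hcase]
          have h1 : lam ^ q ≤ (T * s) ^ q :=
            Real.rpow_le_rpow hlam0.le hlt.le hq.le
          have h2 : (T * s) ^ q = T ^ q * s ^ q := Real.mul_rpow hTpos.le hs0.le
          calc lam ^ q * A ≤ lam ^ q * 1 :=
                mul_le_mul_of_nonneg_left hA1 (Real.rpow_nonneg hlam0.le q)
            _ = lam ^ q := mul_one _
            _ ≤ T ^ q * s ^ q := by rw [← h2]; exact h1
            _ ≤ M * s ^ q := mul_le_mul_of_nonneg_right hM2 hsq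
      have hnn : 0 ≤ lam ^ q * A := mul_nonneg (Real.rpow_nonneg hlam0.le q) hA0
      calc ‖k s * (lam ^ q * A)‖ = |k s| * (lam ^ q * A) := by
            rw [norm_mul, Real.norm_eq_abs, Real.norm_eq_abs, abs_of_nonneg hnn]
        _ ≤ |k s| * (M * s ^ q) := mul_le_mul_of_nonneg_left hmain (abs_nonneg _)
    · -- integrability of the bound
      have hg : IntegrableOn (fun s : ℝ =>
          M * (s ^ (p + q) * Real.exp (-s) + p * (s ^ (p + q - 1) * Real.exp (-s))))
          (Set.Ioi 0) := by
        exact (((aux_int (p + q) (by linarith)).add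
          ((aux_int (p + q - 1) (by linarith)).const_mul p)).const_mul M)
      refine hg.mono' ?_ ?_
      · exact (hkmeas.abs.mul ((measurable_id.pow_const q).const_mul M)).aestronglyMeasurable
      · rw [ae_restrict_iff' measurableSet_Ioi]
        refine Eventually.of_forall fun s hs => ?_
        have hs0 : (0:ℝ) < s := hs
        have hsq : (0:ℝ) ≤ s ^ q := Real.rpow_nonneg hs0.le q
        have hM0 : (0:ℝ) ≤ M := by
          have := Real.rpow_nonneg hTpos.le q; linarith
        have habs : |k s| ≤ (s ^ p + p * s ^ (p - 1)) * Real.exp (-s) := by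
          rw [hk, abs_mul, abs_of_nonneg (Real.exp_nonneg _)]
          apply mul_le_mul_of_nonneg_right _ (Real.exp_nonneg _)
          calc |s ^ p - p * s ^ (p - 1)| ≤ |s ^ p| + |p * s ^ (p - 1)| := abs_sub _ _
            _ = s ^ p + p * s ^ (p - 1) := by
                rw [abs_of_nonneg (Real.rpow_nonneg hs0.le p), abs_of_nonneg
                  (mul_nonneg hp.le (Real.rpow_nonneg hs0.le (p - 1)))]
        have hexp : s ^ p * s ^ q = s ^ (p + q) := (Real.rpow_add hs0 p q).symm
        have hexp2 : s ^ (p - 1) * s ^ q = s ^ (p + q - 1) := by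
          rw [← Real.rpow_add hs0]; ring_nf
        have h1 : ‖|k s| * (M * s ^ q)‖ = |k s| * (M * s ^ q) := by
          rw [Real.norm_eq_abs, abs_of_nonneg (mul_nonneg (abs_nonneg _) (mul_nonneg hM0 hsq))]
        rw [h1]
        calc |k s| * (M * s ^ q)
            ≤ ((s ^ p + p * s ^ (p - 1)) * Real.exp (-s)) * (M * s ^ q) :=
              mul_le_mul_of_nonneg_right habs (mul_nonneg hM0 hsq)
          _ = M * ((s ^ p * s ^ q) * Real.exp (-s) + p * ((s ^ (p - 1) * s ^ q) * Real.exp (-s))) := by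
              ring
          _ = M * (s ^ (p + q) * Real.exp (-s) + p * (s ^ (p + q - 1) * Real.exp (-s))) := by
              rw [hexp, hexp2]
    · -- pointwise limit
      rw [ae_restrict_iff' measurableSet_Ioi]
      refine Eventually.of_forall fun s hs => ?_
      have hs0 : (0:ℝ) < s := hs
      have hdiv : Tendsto (fun lam : ℝ => lam / s) atTop atTop :=
        tendsto_id.atTop_div_const hs0
      have h1 := htail.comp hdiv
      have h2 := (h1.const_mul (s ^ q)).const_mul (k s)
      refine Tendsto.congr' ?_ (by convert h2 using 2; ring)
      filter_upwards [eventually_gt_atTop (0:ℝ)] with lam hlam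
      have hmul : (lam / s) ^ q * s ^ q = lam ^ q := by
        rw [← Real.mul_rpow (div_nonneg hlam.le hs0.le) hs0.le, div_mul_cancel₀ _ (ne_of_gt hs0)]
      simp only [Function.comp]
      rw [← hmul]; ring
  -- value of the limit integral
  have hval : (∫ s in Set.Ioi (0:ℝ), k s * (C * s ^ q))
      = q / (p + q) * (C * Real.Gamma (p + q + 1)) := by
    have heq : Set.EqOn (fun s => k s * (C * s ^ q))
        (fun s => C * (Real.exp (-s) * s ^ (p + q + 1 - 1))
          - (C * p) * (Real.exp (-s) * s ^ (p + q - 1))) (Set.Ioi 0) := by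
      intro s hs
      have hs0 : (0:ℝ) < s := hs
      have h1 : s ^ p * s ^ q = s ^ (p + q) := (Real.rpow_add hs0 p q).symm
      have h2 : s ^ (p - 1) * s ^ q = s ^ (p + q - 1) := by
        rw [← Real.rpow_add hs0]; ring_nf
      simp only [hk, show p + q + 1 - 1 = p + q from by ring]
      rw [← h1, ← h2]; ring
    rw [setIntegral_congr_fun measurableSet_Ioi heq]
    have i1 : IntegrableOn (fun s : ℝ => Real.exp (-s) * s ^ (p + q + 1 - 1)) (Set.Ioi 0) :=
      Real.GammaIntegral_convergent (by linarith)
    have i2 : IntegrableOn (fun s : ℝ => Real.exp (-s) * s ^ (p + q - 1)) (Set.Ioi 0) :=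
      Real.GammaIntegral_convergent hpq
    rw [integral_sub (i1.const_mul C) (i2.const_mul (C * p)), integral_const_mul,
        integral_const_mul, ← Real.Gamma_eq_integral (show (0:ℝ) < p + q + 1 by linarith),
        ← Real.Gamma_eq_integral hpq]
    have hG : Real.Gamma (p + q + 1) = (p + q) * Real.Gamma (p + q) := by
      rw [show p + q + 1 = (p + q) + 1 from by ring, Real.Gamma_add_one (ne_of_gt hpq)]
    rw [hG]
    field_simp
    ring
  rw [← hval]
  refine Tendsto.congr' ?_ hlim
  filter_upwards [eventually_gt_atTop (0:ℝ)] with lam hlam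
  exact (key lam hlam).symm
end

section
/- Let U be a nonnegative real-valued random variable, C > 0, q > 0 and p > 0. If P(U > t) ≤ C·t^{-q} for all t > 0, then there exists a constant C' > 0 such that E[U^{-p} exp(-λ/U)] ≤ C'·λ^{-(p+q)} for all λ > 0. -/
lemma aux_pow_exp (x m : ℝ) (hx : 0 < x) (hm : 0 < m) :
    x ^ m * Real.exp (-x) ≤ m ^ m := by
  rw [Real.rpow_def_of_pos hx, Real.rpow_def_of_pos hm, ← Real.exp_add]
  apply Real.exp_le_exp.mpr
  have h := Real.log_le_sub_one_of_pos (div_pos hx hm)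
  rw [Real.log_div hx.ne' hm.ne'] at h
  have hxm : m * (x / m) = x := by field_simp
  nlinarith [mul_le_mul_of_nonneg_left h hm.le]

lemma aux_bound (p m lam u : ℝ) (hlam : 0 < lam) (hu : 0 < u) (hm : 0 < m) :
    u ^ (-p) * Real.exp (-(lam / u)) ≤ m ^ m * lam ^ (-m) * u ^ (m - p) := by
  have hdu : 0 < lam / u := div_pos hlam hu
  have h1 := aux_pow_exp (lam / u) m hdu hm
  have h2 : Real.exp (-(lam / u)) ≤ m ^ m * ((lam / u) ^ m)⁻¹ := by
    rw [le_mul_inv_iff₀ (Real.rpow_pos_of_pos hdu m), mul_comm]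
    exact h1
  have h3 : ((lam / u) ^ m)⁻¹ = lam ^ (-m) * u ^ m := by
    rw [Real.div_rpow hlam.le hu.le, Real.rpow_neg hlam.le]
    field_simp
  rw [h3] at h2
  calc u ^ (-p) * Real.exp (-(lam / u))
      ≤ u ^ (-p) * (m ^ m * (lam ^ (-m) * u ^ m)) := by
        exact mul_le_mul_of_nonneg_left h2 (Real.rpow_nonneg hu.le _)
    _ = m ^ m * lam ^ (-m) * (u ^ (-p) * u ^ m) := by ring
    _ = m ^ m * lam ^ (-m) * u ^ (m - p) := by
        rw [← Real.rpow_add hu]; ring_nf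

open MeasureTheory ProbabilityTheory Filter

/-- If `P(U > t) ≤ C·t^{-q}` for all `t > 0`, then there is `C' > 0` with
`E[U^{-p} exp(-λ/U)] ≤ C'·λ^{-(p+q)}` for all `λ > 0`, where `U^{-p} exp(-λ/U) := 0`
on `{U = 0}`. -/
theorem stmt_2 {Ω : Type*} [MeasureSpace Ω] [IsProbabilityMeasure (ℙ : Measure Ω)]
    (U : Ω → ℝ) (hUmeas : Measurable U) (hUnn : ∀ ω, 0 ≤ U ω)
    (C q p : ℝ) (hC : 0 < C) (hq : 0 < q) (hp : 0 < p)
    (htail : ∀ t : ℝ, 0 < t → (ℙ {ω | U ω > t}).toReal ≤ C * t ^ (-q)) :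
    ∃ C' > (0:ℝ), ∀ lam : ℝ, 0 < lam →
      (∫ ω, (if U ω = 0 then 0 else U ω ^ (-p) * Real.exp (-(lam / U ω)))) ≤
        C' * lam ^ (-(p + q)) := by
  set r : ℝ := p + q + 1 with hr
  set δ : ℝ := q / (q + 1) with hδ
  have hrpos : 0 < r := by positivity
  have hq1 : 0 < q + 1 := by positivity
  have hδpos : 0 < δ := by positivity
  have hδlt : δ < 1 := by
    rw [hδ, div_lt_one hq1]; linarith
  refine ⟨C * (2 * r ^ r) ^ δ * (p ^ p) ^ (1 - δ) * (q + 1), by positivity, ?_⟩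
  intro lam hlam
  set g : Ω → ℝ := fun ω => if U ω = 0 then 0 else U ω ^ (-p) * Real.exp (-(lam / U ω)) with hg
  set M : ℝ := p ^ p * lam ^ (-p) with hM
  have hMpos : 0 < M := by positivity
  -- nonnegativity of g
  have hg0 : ∀ ω, 0 ≤ g ω := by
    intro ω
    rw [hg]
    dsimp only
    split
    · exact le_refl 0
    · exact mul_nonneg (Real.rpow_nonneg (hUnn ω) _) (Real.exp_nonneg _)
  -- upper bound g ≤ M
  have hgM : ∀ ω, g ω ≤ M := by
    intro ω
    rw [hg]
    dsimp only
    split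
    · exact hMpos.le
    · rename_i h
      have hu : 0 < U ω := lt_of_le_of_ne (hUnn ω) (Ne.symm h)
      have := aux_bound p p lam (U ω) hlam hu hp
      simpa using this
  -- the other pointwise bound
  have hgr : ∀ ω, U ω ≠ 0 → g ω ≤ r ^ r * lam ^ (-r) * U ω ^ (q + 1) := by
    intro ω h
    have hu : 0 < U ω := lt_of_le_of_ne (hUnn ω) (Ne.symm h)
    have := aux_bound p r lam (U ω) hlam hu hrpos
    rw [hg]
    dsimp only
    rw [if_neg h]
    have hrq : r - p = q + 1 := by rw [hr]; ring
    rwa [hrq] at this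
  -- measurability and integrability
  have hgmeas : Measurable g := by
    apply Measurable.ite (hUmeas (measurableSet_singleton 0)) measurable_const
    fun_prop
  have hgint : Integrable g := by
    apply Integrable.mono' (integrable_const M) hgmeas.aestronglyMeasurable
    filter_upwards with ω
    rw [Real.norm_eq_abs, abs_of_nonneg (hg0 ω)]
    exact hgM ω
  -- layer cake
  have hlc := hgint.integral_eq_integral_Ioc_meas_le (Eventually.of_forall hg0)
    (Eventually.of_forall hgM)
  set W : ℝ := lam ^ r / (2 * r ^ r) with hW
  have hWpos : 0 < W := by
    rw [hW]
    have := Real.rpow_pos_of_pos hlam r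
    have := Real.rpow_pos_of_pos hrpos r
    positivity
  -- tail probability bound
  have htb : ∀ t : ℝ, 0 < t → (ℙ {a | t ≤ g a}).toReal ≤ C * W ^ (-δ) * t ^ (-δ) := by
    intro t ht
    set ts : ℝ := (t * W) ^ (1 / (q + 1)) with hts
    have htW : 0 < t * W := mul_pos ht hWpos
    have htspos : 0 < ts := Real.rpow_pos_of_pos htW _
    have hsub : {a | t ≤ g a} ⊆ {ω | U ω > ts} := by
      intro ω hω
      simp only [Set.mem_setOf_eq] at hω ⊢
      have hne : U ω ≠ 0 := by
        intro h0
        have hz : g ω = 0 := by rw [hg]; dsimp only; rw [if_pos h0]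
        rw [hz] at hω; linarith
      have hu : 0 < U ω := lt_of_le_of_ne (hUnn ω) (Ne.symm hne)
      have h1 := hgr ω hne
      have hl : (0:ℝ) < lam ^ r := Real.rpow_pos_of_pos hlam r
      have hrr : (0:ℝ) < r ^ r := Real.rpow_pos_of_pos hrpos r
      have hU1 : (0:ℝ) < U ω ^ (q + 1) := Real.rpow_pos_of_pos hu _
      have h2 : t * W < U ω ^ (q + 1) := by
        have hinv : lam ^ (-r) = (lam ^ r)⁻¹ := Real.rpow_neg hlam.le r
        rw [hinv] at h1
        have h3 : t ≤ r ^ r * (lam ^ r)⁻¹ * U ω ^ (q + 1) := le_trans hω h1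
        rw [hW, mul_div_assoc', div_lt_iff₀ (by positivity)]
        nlinarith [mul_le_mul_of_nonneg_right h3 hl.le, inv_mul_cancel₀ hl.ne',
          mul_pos hrr hU1]
      calc ts = (t * W) ^ (1 / (q + 1)) := rfl
        _ < (U ω ^ (q + 1)) ^ (1 / (q + 1)) :=
            Real.rpow_lt_rpow htW.le h2 (by positivity)
        _ = U ω := by
            rw [← Real.rpow_mul hu.le, mul_one_div, div_self hq1.ne', Real.rpow_one]
    have h4 : (ℙ {a | t ≤ g a}).toReal ≤ (ℙ {ω | U ω > ts}).toReal :=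
      ENNReal.toReal_mono (measure_ne_top _ _) (measure_mono hsub)
    have h5 := htail ts htspos
    have h6 : ts ^ (-q) = t ^ (-δ) * W ^ (-δ) := by
      rw [hts, ← Real.rpow_mul htW.le]
      have he : 1 / (q + 1) * (-q) = -δ := by rw [hδ]; field_simp
      rw [he, ← Real.mul_rpow ht.le hWpos.le]
    calc (ℙ {a | t ≤ g a}).toReal ≤ (ℙ {ω | U ω > ts}).toReal := h4
      _ ≤ C * ts ^ (-q) := h5
      _ = C * W ^ (-δ) * t ^ (-δ) := by rw [h6]; ring
  -- integrability of the comparison function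
  have hInt : IntegrableOn (fun t => C * W ^ (-δ) * t ^ (-δ)) (Set.Ioc 0 M) := by
    apply Integrable.const_mul
    exact (intervalIntegrable_iff_integrableOn_Ioc_of_le hMpos.le).mp
      (intervalIntegral.intervalIntegrable_rpow' (by linarith))
  have h1δ : (0:ℝ) < 1 - δ := by linarith
  rw [hlc]
  calc (∫ t in Set.Ioc 0 M, (ℙ {a | t ≤ g a}).toReal)
      ≤ ∫ t in Set.Ioc 0 M, C * W ^ (-δ) * t ^ (-δ) := by
        apply integral_mono_of_nonneg
        · exact Eventually.of_forall fun t => ENNReal.toReal_nonneg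
        · exact hInt
        · exact (ae_restrict_iff' measurableSet_Ioc).mpr
            (Eventually.of_forall fun t htmem => htb t htmem.1)
    _ = C * W ^ (-δ) * ∫ t in Set.Ioc 0 M, t ^ (-δ) := by rw [integral_const_mul]
    _ = C * W ^ (-δ) * (M ^ (1 - δ) / (1 - δ)) := by
        rw [← intervalIntegral.integral_of_le hMpos.le,
          integral_rpow (Or.inl (by linarith)),
          Real.zero_rpow (by linarith : -δ + 1 ≠ 0),
          show -δ + 1 = 1 - δ by ring]
        ring
    _ = C * (2 * r ^ r) ^ δ * (p ^ p) ^ (1 - δ) * (q + 1) * lam ^ (-(p + q)) := by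
        have e1 : W ^ (-δ) = (2 * r ^ r) ^ δ * lam ^ (r * -δ) := by
          have h2r : (0:ℝ) < 2 * r ^ r := by positivity
          rw [hW, Real.div_rpow (Real.rpow_nonneg hlam.le r) h2r.le,
            ← Real.rpow_mul hlam.le, Real.rpow_neg h2r.le]
          field_simp
        have e2 : M ^ (1 - δ) = (p ^ p) ^ (1 - δ) * lam ^ (-p * (1 - δ)) := by
          rw [hM, Real.mul_rpow (Real.rpow_nonneg hp.le p) (Real.rpow_nonneg hlam.le _),
            ← Real.rpow_mul hlam.le]
        have e4 : lam ^ (r * -δ) * lam ^ (-p * (1 - δ)) = lam ^ (-(p + q)) := by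
          rw [← Real.rpow_add hlam]
          congr 1
          rw [hr, hδ]
          field_simp
          ring
        have e5 : (1 - δ)⁻¹ = q + 1 := by
          rw [hδ]
          rw [inv_eq_iff_eq_inv]
          field_simp
          ring
        rw [e1, e2, div_eq_mul_inv, e5]
        calc C * ((2 * r ^ r) ^ δ * lam ^ (r * -δ)) *
              ((p ^ p) ^ (1 - δ) * lam ^ (-p * (1 - δ)) * (q + 1))
            = C * (2 * r ^ r) ^ δ * (p ^ p) ^ (1 - δ) * (q + 1) *
              (lam ^ (r * -δ) * lam ^ (-p * (1 - δ))) := by ring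
          _ = _ := by rw [e4]
end

section
/- Let U be a nonnegative real-valued random variable and C > 0, q > 0. If there exists t₀ > 0 such that P(U > t) ≤ C·t^{-q} for all t ≥ t₀, then limsup_{λ→0+} E[U^q exp(-λU)] / (-log λ) ≤ C·q. -/
open MeasureTheory ProbabilityTheory Filter

/-- Pointwise sup bound: `u^q e^{-λu} ≤ q^q e^{-q} λ^{-q}`. -/
lemma aux_sup_bound {q lam u : ℝ} (hq : 0 < q) (hlam : 0 < lam) (hu : 0 ≤ u) :
    u ^ q * Real.exp (-(lam * u)) ≤ q ^ q * Real.exp (-q) * lam ^ (-q) := by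
  rcases eq_or_lt_of_le hu with h0 | hu'
  · rw [← h0, Real.zero_rpow (ne_of_gt hq), zero_mul]
    positivity
  · rw [Real.rpow_def_of_pos hu', Real.rpow_def_of_pos hq, Real.rpow_def_of_pos hlam,
      ← Real.exp_add, mul_assoc, ← Real.exp_add, ← Real.exp_add]
    apply Real.exp_le_exp.2
    have key : Real.log (lam * u / q) ≤ lam * u / q - 1 :=
      Real.log_le_sub_one_of_pos (by positivity)
    have h2 : q * Real.log (lam * u / q) ≤ lam * u - q := by
      calc q * Real.log (lam * u / q) ≤ q * (lam * u / q - 1) :=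
            mul_le_mul_of_nonneg_left key hq.le
        _ = lam * u - q := by field_simp
    rw [Real.log_div (by positivity) (ne_of_gt hq),
      Real.log_mul (ne_of_gt hlam) (ne_of_gt hu')] at h2
    nlinarith [h2]

/-- If `P(U > t) ≤ C·t^{-q}` for all `t ≥ t₀` (some `t₀ > 0`), then
`limsup_{λ→0⁺} E[U^q exp(-λU)] / (-log λ) ≤ C·q`. -/
theorem stmt_4 {Ω : Type*} [MeasureSpace Ω] [IsProbabilityMeasure (ℙ : Measure Ω)]
    (U : Ω → ℝ) (hUmeas : Measurable U) (hUnn : ∀ ω, 0 ≤ U ω)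
    (C q : ℝ) (hC : 0 < C) (hq : 0 < q)
    (htail : ∃ t₀ > (0:ℝ), ∀ t ≥ t₀, (ℙ {ω | U ω > t}).toReal ≤ C * t ^ (-q)) :
    Filter.limsup
      (fun lam : ℝ => (∫ ω, U ω ^ q * Real.exp (-(lam * U ω))) / (-Real.log lam))
      (nhdsWithin 0 (Set.Ioi 0)) ≤ C * q := by
  obtain ⟨t₀, ht₀, htail⟩ := htail
  set K : ℝ := t₀ ^ q - C * q * Real.log t₀ + C * q ^ q * Real.exp (-q) with hK
  -- Main integral estimate for small λ
  have main : ∀ lam : ℝ, lam ∈ Set.Ioo 0 (min t₀⁻¹ 1) →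
      (∫ ω, U ω ^ q * Real.exp (-(lam * U ω))) ≤ K + C * q * (-Real.log lam) := by
    intro lam hlam
    obtain ⟨hlam0, hlam1⟩ := hlam
    set T : ℝ := lam⁻¹ with hTdef
    have hT0 : 0 < T := inv_pos.2 hlam0
    have hTt₀ : t₀ < T := by
      have : lam < t₀⁻¹ := lt_of_lt_of_le hlam1 (min_le_left _ _)
      calc t₀ = (t₀⁻¹)⁻¹ := (inv_inv t₀).symm
        _ < lam⁻¹ := by exact inv_strictAnti₀ hlam0 this
    set V : Ω → ℝ := fun ω => min (U ω) T with hVdef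
    have hVnn : ∀ ω, 0 ≤ V ω := fun ω => le_min (hUnn ω) hT0.le
    have hVleT : ∀ ω, V ω ≤ T := fun ω => min_le_right _ _
    set W : Ω → ℝ := fun ω => V ω ^ q with hWdef
    have hWmeas : Measurable W :=
      (Real.continuous_rpow_const hq.le).measurable.comp (hUmeas.min measurable_const)
    have hWnn : ∀ ω, 0 ≤ W ω := fun ω => Real.rpow_nonneg (hVnn ω) q
    set A : ℝ := t₀ ^ q with hAdef
    set B : ℝ := T ^ q with hBdef
    have hA0 : 0 < A := Real.rpow_pos_of_pos ht₀ q
    have hB0 : 0 < B := Real.rpow_pos_of_pos hT0 q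
    have hAB : A < B := Real.rpow_lt_rpow ht₀.le hTt₀ hq
    have hWleB : ∀ ω, W ω ≤ B := fun ω => Real.rpow_le_rpow (hVnn ω) (hVleT ω) hq.le
    have hWint : Integrable W := by
      refine ⟨hWmeas.aestronglyMeasurable, HasFiniteIntegral.of_bounded (C := B) ?_⟩
      filter_upwards with ω
      rw [Real.norm_eq_abs, abs_of_nonneg (hWnn ω)]
      exact hWleB ω
    -- layer cake
    have hlayer := hWint.integral_eq_integral_meas_lt (Filter.Eventually.of_forall hWnn)
    set φ : ℝ → ℝ := fun s => ((ℙ : Measure Ω) {a | s < W a}).toReal with hφdef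
    set ψ : ℝ → ℝ := fun s => Set.indicator (Set.Ioc 0 A) (fun _ => (1:ℝ)) s
        + Set.indicator (Set.Ioo A B) (fun s => C / s) s with hψdef
    have hψ1int : Integrable (Set.indicator (Set.Ioc 0 A) (fun _ => (1:ℝ))) := by
      rw [integrable_indicator_iff measurableSet_Ioc]
      exact integrableOn_const measure_Ioc_lt_top.ne (by simp)
    have hψ2int : Integrable (Set.indicator (Set.Ioo A B) (fun s => C / s)) := by
      rw [integrable_indicator_iff measurableSet_Ioo]
      refine (ContinuousOn.integrableOn_Icc ?_).mono_set Set.Ioo_subset_Icc_self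
      refine continuousOn_const.div continuousOn_id fun x hx => ?_
      exact ne_of_gt (lt_of_lt_of_le hA0 hx.1)
    have hψint : Integrable ψ := hψ1int.add hψ2int
    have hψnn : ∀ s, 0 ≤ ψ s := by
      intro s
      refine add_nonneg (Set.indicator_nonneg (fun x _ => zero_le_one) s)
        (Set.indicator_nonneg (fun x hx => ?_) s)
      exact div_nonneg hC.le (le_of_lt (lt_trans hA0 hx.1))
    have hφnn : ∀ s, 0 ≤ φ s := fun s => ENNReal.toReal_nonneg
    have hφψ : ∀ s ∈ Set.Ioi (0:ℝ), φ s ≤ ψ s := by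
      intro s hs
      rcases le_or_gt s A with hsA | hsA
      · have h1 : Set.indicator (Set.Ioc 0 A) (fun _ => (1:ℝ)) s = 1 :=
          Set.indicator_of_mem (Set.mem_Ioc.2 ⟨hs, hsA⟩) _
        have hφle1 : φ s ≤ 1 := by
          have := prob_le_one (μ := (ℙ : Measure Ω)) (s := {a | s < W a})
          simpa using ENNReal.toReal_mono (by simp) this
        have h2 : 0 ≤ Set.indicator (Set.Ioo A B) (fun s => C / s) s :=
          Set.indicator_nonneg
            (fun x hx => div_nonneg hC.le (le_of_lt (lt_trans hA0 hx.1))) s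
        simp only [hψdef, h1]; linarith
      · rcases lt_or_ge s B with hsB | hsB
        · -- A < s < B
          have hs0 : (0:ℝ) < s := lt_trans hA0 hsA
          have h1 : Set.indicator (Set.Ioc 0 A) (fun _ => (1:ℝ)) s = 0 :=
            Set.indicator_of_notMem (fun h => absurd h.2 (not_le.2 hsA)) _
          have h2 : Set.indicator (Set.Ioo A B) (fun s => C / s) s = C / s :=
            Set.indicator_of_mem (Set.mem_Ioo.2 ⟨hsA, hsB⟩) _
          set r : ℝ := s ^ q⁻¹ with hrdef
          have hr0 : 0 < r := Real.rpow_pos_of_pos hs0 _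
          have hrt₀ : t₀ < r := by
            have := Real.rpow_lt_rpow hA0.le hsA (inv_pos.2 hq)
            rwa [hAdef, Real.rpow_rpow_inv ht₀.le (ne_of_gt hq)] at this
          have hsub : {a | s < W a} ⊆ {a | U a > r} := by
            intro a ha
            have h3 : r < (W a) ^ q⁻¹ :=
              Real.rpow_lt_rpow hs0.le ha (inv_pos.2 hq)
            rw [hWdef, Real.rpow_rpow_inv (hVnn a) (ne_of_gt hq)] at h3
            exact lt_of_lt_of_le h3 (min_le_left _ _)
          have hφb : φ s ≤ ((ℙ : Measure Ω) {a | U a > r}).toReal :=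
            ENNReal.toReal_mono (measure_ne_top _ _) (measure_mono hsub)
          have htb := htail r hrt₀.le
          have hrq : r ^ (-q) = s⁻¹ := by
            rw [hrdef, ← Real.rpow_mul hs0.le,
              show q⁻¹ * -q = -1 by field_simp, Real.rpow_neg_one]
          rw [hrq] at htb
          simp only [hψdef, h1, h2, zero_add]
          calc φ s ≤ C * s⁻¹ := le_trans hφb htb
            _ = C / s := (div_eq_mul_inv C s).symm
        · -- s ≥ B : φ s = 0
          have hempty : {a | s < W a} = ∅ := by
            ext a
            simp only [Set.mem_setOf_eq, Set.mem_empty_iff_false, iff_false, not_lt]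
            exact le_trans (hWleB a) hsB
          have : φ s = 0 := by rw [hφdef]; simp [hempty]
          rw [this]; exact hψnn s
    have hφmeas : Measurable φ := by
      apply Measurable.ennreal_toReal
      exact Antitone.measurable fun _ _ hst => measure_mono fun _ h => lt_of_le_of_lt hst h
    have hφint : IntegrableOn φ (Set.Ioi 0) := by
      refine Integrable.mono' hψint.integrableOn hφmeas.aestronglyMeasurable ?_
      rw [ae_restrict_iff' measurableSet_Ioi]
      filter_upwards with s hs
      rw [Real.norm_eq_abs, abs_of_nonneg (hφnn s)]
      exact hφψ s hs
    have hWbound : (∫ ω, W ω) ≤ A + C * (Real.log B - Real.log A) := by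
      rw [hlayer]
      have step1 : (∫ s in Set.Ioi (0:ℝ), φ s) ≤ ∫ s in Set.Ioi (0:ℝ), ψ s :=
        setIntegral_mono_on hφint hψint.integrableOn measurableSet_Ioi hφψ
      have step2 : (∫ s in Set.Ioi (0:ℝ), ψ s) = A + C * (Real.log B - Real.log A) := by
        rw [hψdef]
        rw [integral_add hψ1int.integrableOn hψ2int.integrableOn]
        have e1 : (∫ s in Set.Ioi (0:ℝ),
            Set.indicator (Set.Ioc 0 A) (fun _ => (1:ℝ)) s) = A := by
          rw [setIntegral_indicator measurableSet_Ioc,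
            Set.inter_eq_right.2 (fun x hx => hx.1)]
          simp [Real.volume_Ioc, ENNReal.toReal_ofReal hA0.le, hA0.le]
        have e2 : (∫ s in Set.Ioi (0:ℝ),
            Set.indicator (Set.Ioo A B) (fun s => C / s) s)
            = C * (Real.log B - Real.log A) := by
          have hinter : Set.Ioi (0:ℝ) ∩ Set.Ioo A B = Set.Ioo A B :=
            Set.inter_eq_right.2 (fun x hx => lt_trans hA0 hx.1)
          rw [setIntegral_indicator measurableSet_Ioo, hinter]
          simp_rw [div_eq_mul_inv]
          rw [integral_const_mul]
          have : (∫ s in Set.Ioo A B, s⁻¹) = Real.log (B / A) := by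
            rw [← MeasureTheory.integral_Ioc_eq_integral_Ioo,
              ← intervalIntegral.integral_of_le hAB.le]
            exact integral_inv_of_pos hA0 hB0
          rw [this, Real.log_div (ne_of_gt hB0) (ne_of_gt hA0)]
        rw [e1, e2]
      exact step1.trans step2.le
    -- split the original integral
    set M : ℝ := q ^ q * Real.exp (-q) * lam ^ (-q) with hMdef
    have hM0 : 0 ≤ M := by positivity
    have hsetmeas : MeasurableSet {a | T < U a} := measurableSet_lt measurable_const hUmeas
    have hptwise : ∀ ω, U ω ^ q * Real.exp (-(lam * U ω)) ≤
        W ω + Set.indicator {a | T < U a} (fun _ => M) ω := by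
      intro ω
      rcases le_or_gt (U ω) T with h | h
      · have h1 : U ω ^ q * Real.exp (-(lam * U ω)) ≤ U ω ^ q := by
          apply mul_le_of_le_one_right (Real.rpow_nonneg (hUnn ω) q)
          rw [Real.exp_le_one_iff]
          have : 0 ≤ lam * U ω := mul_nonneg hlam0.le (hUnn ω)
          linarith
        have h2 : U ω ^ q = W ω := by rw [hWdef, hVdef]; simp [min_eq_left h]
        have h3 : 0 ≤ Set.indicator {a | T < U a} (fun _ => M) ω :=
          Set.indicator_nonneg (fun _ _ => hM0) ω
        linarith [h1, h2.le, h2.ge]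
      · have h1 : Set.indicator {a | T < U a} (fun _ => M) ω = M :=
          Set.indicator_of_mem (show ω ∈ {a | T < U a} from h) _
        have h2 := aux_sup_bound hq hlam0 (hUnn ω)
        rw [h1]
        linarith [hWnn ω, h2]
    have hfmeas : Measurable fun ω => U ω ^ q * Real.exp (-(lam * U ω)) :=
      ((Real.continuous_rpow_const hq.le).measurable.comp hUmeas).mul
        (Real.continuous_exp.measurable.comp ((hUmeas.const_mul lam).neg))
    have hfint : Integrable fun ω => U ω ^ q * Real.exp (-(lam * U ω)) := by
      refine ⟨hfmeas.aestronglyMeasurable, HasFiniteIntegral.of_bounded (C := M) ?_⟩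
      filter_upwards with ω
      rw [Real.norm_eq_abs, abs_of_nonneg
        (mul_nonneg (Real.rpow_nonneg (hUnn ω) q) (Real.exp_pos _).le)]
      exact aux_sup_bound hq hlam0 (hUnn ω)
    have hindint : Integrable (Set.indicator {a | T < U a} (fun _ => M)) :=
      (integrable_const M).indicator hsetmeas
    have hsplit : (∫ ω, U ω ^ q * Real.exp (-(lam * U ω))) ≤
        (∫ ω, W ω) + M * ((ℙ : Measure Ω) {a | T < U a}).toReal := by
      calc (∫ ω, U ω ^ q * Real.exp (-(lam * U ω)))
          ≤ ∫ ω, (W ω + Set.indicator {a | T < U a} (fun _ => M) ω) :=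
            integral_mono hfint (hWint.add hindint) hptwise
        _ = (∫ ω, W ω) + ∫ ω, Set.indicator {a | T < U a} (fun _ => M) ω :=
            integral_add hWint hindint
        _ = (∫ ω, W ω) + M * ((ℙ : Measure Ω) {a | T < U a}).toReal := by
            rw [integral_indicator_const M hsetmeas, smul_eq_mul, mul_comm]
            rfl
    have htailT : ((ℙ : Measure Ω) {a | T < U a}).toReal ≤ C * T ^ (-q) :=
      htail T hTt₀.le
    have hMT : M * (C * T ^ (-q)) = C * q ^ q * Real.exp (-q) := by
      have hTq : T ^ (-q) = (lam ^ (-q))⁻¹ := by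
        rw [hTdef, Real.inv_rpow hlam0.le]
      rw [hMdef, hTq]
      have : lam ^ (-q) ≠ 0 := ne_of_gt (Real.rpow_pos_of_pos hlam0 _)
      field_simp
    have hlogB : Real.log B = q * (-Real.log lam) := by
      rw [hBdef, Real.log_rpow hT0, hTdef, Real.log_inv]
    have hlogA : Real.log A = q * Real.log t₀ := Real.log_rpow ht₀ q
    have hMtail : M * ((ℙ : Measure Ω) {a | T < U a}).toReal
        ≤ C * q ^ q * Real.exp (-q) := by
      calc M * ((ℙ : Measure Ω) {a | T < U a}).toReal ≤ M * (C * T ^ (-q)) :=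
            mul_le_mul_of_nonneg_left htailT hM0
        _ = C * q ^ q * Real.exp (-q) := hMT
    calc (∫ ω, U ω ^ q * Real.exp (-(lam * U ω)))
        ≤ (∫ ω, W ω) + M * ((ℙ : Measure Ω) {a | T < U a}).toReal := hsplit
      _ ≤ (A + C * (Real.log B - Real.log A)) + C * q ^ q * Real.exp (-q) := by
          linarith [hWbound, hMtail]
      _ = K + C * q * (-Real.log lam) := by
          rw [hlogB, hlogA, hK, hAdef]; ring
  -- now the limsup computation
  set l : Filter ℝ := nhdsWithin 0 (Set.Ioi 0) with hl
  set f : ℝ → ℝ := fun lam =>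
    (∫ ω, U ω ^ q * Real.exp (-(lam * U ω))) / (-Real.log lam) with hf
  set g : ℝ → ℝ := fun lam => C * q + K * (-Real.log lam)⁻¹ with hg
  have hε : (0:ℝ) < min t₀⁻¹ 1 := lt_min (inv_pos.2 ht₀) one_pos
  have hmem : Set.Ioo (0:ℝ) (min t₀⁻¹ 1) ∈ l :=
    Ioo_mem_nhdsGT_of_mem ⟨le_refl 0, hε⟩
  have hev : ∀ᶠ lam in l, f lam ≤ g lam := by
    filter_upwards [hmem] with lam hlam
    have hlam1 : lam < 1 := lt_of_lt_of_le hlam.2 (min_le_right _ _)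
    have hlog : 0 < -Real.log lam := by
      have := Real.log_neg hlam.1 hlam1
      linarith
    have h1 : f lam ≤ (K + C * q * (-Real.log lam)) / (-Real.log lam) := by
      rw [hf]
      exact div_le_div_of_nonneg_right (main lam hlam) hlog.le
    calc f lam ≤ (K + C * q * (-Real.log lam)) / (-Real.log lam) := h1
      _ = g lam := by
          rw [hg]
          have hne : -Real.log lam ≠ 0 := ne_of_gt hlog
          rw [add_div, mul_div_assoc, div_self hne, mul_one, div_eq_mul_inv, add_comm]
  have hgt : Tendsto g l (nhds (C * q)) := by
    have h1 : Tendsto (fun lam => -Real.log lam) l atTop :=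
      tendsto_neg_atBot_atTop.comp Real.tendsto_log_nhdsGT_zero
    have h2 : Tendsto (fun lam => (-Real.log lam)⁻¹) l (nhds 0) :=
      h1.inv_tendsto_atTop
    have h3 : Tendsto (fun lam => C * q + K * (-Real.log lam)⁻¹) l
        (nhds (C * q + K * 0)) := tendsto_const_nhds.add (h2.const_mul K)
    rw [mul_zero, add_zero] at h3
    exact h3
  have hfnn : ∀ᶠ lam in l, 0 ≤ f lam := by
    filter_upwards [hmem] with lam hlam
    have hlam1 : lam < 1 := lt_of_lt_of_le hlam.2 (min_le_right _ _)
    have hlog : 0 < -Real.log lam := by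
      have := Real.log_neg hlam.1 hlam1
      linarith
    apply div_nonneg _ hlog.le
    apply integral_nonneg
    intro ω
    exact mul_nonneg (Real.rpow_nonneg (hUnn ω) q) (Real.exp_pos _).le
  have hbdd : IsBoundedUnder (· ≤ ·) l g := hgt.isBoundedUnder_le
  have hfbd : IsBoundedUnder (· ≥ ·) l f := ⟨0, eventually_map.2 hfnn⟩
  have hcobdd : IsCoboundedUnder (· ≤ ·) l f := hfbd.isCoboundedUnder_le
  calc Filter.limsup f l ≤ Filter.limsup g l := limsup_le_limsup hev hcobdd hbdd
    _ = C * q := hgt.limsup_eq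
end

section
/- Let U and V be independent nonnegative real-valued random variables. Suppose there exist C > 0 and q > 0 such that (i) lim_{t→∞} t^q · P(U > t) = C, and (ii) for every p > 0, lim_{t→∞} t^p · P(V > t) = 0. Then E[V^q] < ∞ and lim_{t→∞} t^q · P(U·V > t) = C · E[V^q]. -/
open MeasureTheory ProbabilityTheory Filter Set
open scoped ENNReal

/-- If `U, V ≥ 0` are independent, `t^q · P(U > t) → C > 0`, and
`t^p · P(V > t) → 0` for every `p > 0`, then `E[V^q] < ∞` and
`t^q · P(U·V > t) → C · E[V^q]`. -/
theorem stmt_5 {Ω : Type*} [MeasureSpace Ω] [IsProbabilityMeasure (ℙ : Measure Ω)]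
    (U V : Ω → ℝ) (hUmeas : Measurable U) (hVmeas : Measurable V)
    (hUnn : ∀ ω, 0 ≤ U ω) (hVnn : ∀ ω, 0 ≤ V ω)
    (hInd : IndepFun U V)
    (C q : ℝ) (hC : 0 < C) (hq : 0 < q)
    (hU : Tendsto (fun t : ℝ => t ^ q * (ℙ {ω | U ω > t}).toReal) atTop (nhds C))
    (hV : ∀ p : ℝ, 0 < p →
      Tendsto (fun t : ℝ => t ^ p * (ℙ {ω | V ω > t}).toReal) atTop (nhds 0)) :
    Integrable (fun ω => V ω ^ q) ∧
      Tendsto (fun t : ℝ => t ^ q * (ℙ {ω | U ω * V ω > t}).toReal) atTop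
        (nhds (C * ∫ ω, V ω ^ q)) := by
  have probToReal : ∀ (s : Set Ω), (ℙ s).toReal ≤ 1 := by
    intro s
    have h1 : ℙ s ≤ 1 := prob_le_one
    calc (ℙ s).toReal ≤ (1 : ℝ≥0∞).toReal := ENNReal.toReal_mono (by simp) h1
      _ = 1 := by simp
  have probNN : ∀ (s : Set Ω), 0 ≤ (ℙ s).toReal := fun s => ENNReal.toReal_nonneg
  -- Part A : uniform bound M on s^q * P(U > s)
  obtain ⟨M, hM0, hM⟩ :
      ∃ M : ℝ, 0 < M ∧ ∀ s : ℝ, 0 < s → s ^ q * (ℙ {ω | U ω > s}).toReal ≤ M := by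
    have hev : ∀ᶠ s : ℝ in atTop, s ^ q * (ℙ {ω | U ω > s}).toReal < C + 1 :=
      hU.eventually_lt_const (lt_add_one C)
    obtain ⟨T, hT⟩ := eventually_atTop.mp hev
    set T' := max T 1 with hT'
    refine ⟨max (C + 1) (T' ^ q), lt_max_of_lt_left (by linarith), ?_⟩
    intro s hs
    rcases le_or_gt T s with h | h
    · exact le_max_of_le_left (hT s h).le
    · refine le_max_of_le_right ?_
      calc s ^ q * (ℙ {ω | U ω > s}).toReal ≤ s ^ q * 1 := by
            exact mul_le_mul_of_nonneg_left (probToReal _) (Real.rpow_nonneg hs.le q)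
        _ = s ^ q := mul_one _
        _ ≤ T' ^ q := Real.rpow_le_rpow hs.le (h.le.trans (le_max_left _ _)) hq.le
  -- Part B : integrability of V^q
  have hVq_meas : Measurable fun ω => V ω ^ q :=
    (Real.continuous_rpow_const hq.le).measurable.comp hVmeas
  have hVq_nn : (0 : Ω → ℝ) ≤ᵐ[ℙ] fun ω => V ω ^ q :=
    Eventually.of_forall fun ω => Real.rpow_nonneg (hVnn ω) q
  obtain ⟨T₀, hT₀⟩ : ∃ T₀ : ℝ, ∀ s ≥ T₀, s ^ (2 * q) * (ℙ {ω | V ω > s}).toReal < 1 :=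
    eventually_atTop.mp ((hV (2 * q) (by linarith)).eventually_lt_const one_pos)
  set T₁ := max T₀ 1 with hT₁def
  have hT₁pos : (0 : ℝ) < T₁ := lt_max_of_lt_right one_pos
  have htail : ∀ t : ℝ, T₁ ^ q ≤ t → ℙ {ω | t < V ω ^ q} ≤ ENNReal.ofReal (t ^ (-2 : ℝ)) := by
    intro t ht
    have hT₁q : (0 : ℝ) < T₁ ^ q := Real.rpow_pos_of_pos hT₁pos q
    have htpos : (0 : ℝ) < t := lt_of_lt_of_le hT₁q ht
    set s := t ^ q⁻¹ with hs
    have hspos : 0 < s := Real.rpow_pos_of_pos htpos _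
    have hsT : T₁ ≤ s := by
      calc T₁ = (T₁ ^ q) ^ q⁻¹ := by
            rw [← Real.rpow_mul hT₁pos.le, mul_inv_cancel₀ hq.ne', Real.rpow_one]
        _ ≤ s := Real.rpow_le_rpow hT₁q.le ht (by positivity)
    have hsub : {ω | t < V ω ^ q} ⊆ {ω | V ω > s} := by
      intro ω hω
      have h1 : s < (V ω ^ q) ^ q⁻¹ :=
        Real.rpow_lt_rpow htpos.le hω (by positivity)
      have h2 : (V ω ^ q) ^ q⁻¹ = V ω := by
        rw [← Real.rpow_mul (hVnn ω), mul_inv_cancel₀ hq.ne', Real.rpow_one]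
      rw [h2] at h1; exact h1
    have h3 := hT₀ s (le_trans (le_max_left _ _) hsT)
    have h4 : (ℙ {ω | V ω > s}).toReal ≤ s ^ (-(2 * q)) := by
      have hs2q : 0 < s ^ (2 * q) := Real.rpow_pos_of_pos hspos _
      rw [Real.rpow_neg hspos.le]
      have key : s ^ (2*q) * (s ^ (2*q))⁻¹ = 1 := mul_inv_cancel₀ hs2q.ne'
      exact (mul_le_mul_iff_right₀ hs2q).mp (by rw [key]; exact h3.le)
    calc ℙ {ω | t < V ω ^ q} ≤ ℙ {ω | V ω > s} := measure_mono hsub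
      _ = ENNReal.ofReal (ℙ {ω | V ω > s}).toReal := (ENNReal.ofReal_toReal (measure_ne_top _ _)).symm
      _ ≤ ENNReal.ofReal (s ^ (-(2 * q))) := ENNReal.ofReal_le_ofReal h4
      _ = ENNReal.ofReal (t ^ (-2 : ℝ)) := by
          rw [hs, ← Real.rpow_mul htpos.le]
          have hexp : q⁻¹ * -(2*q) = -2 := by field_simp
          rw [hexp]
  have hIntVq : Integrable (fun ω => V ω ^ q) := by
    refine ⟨hVq_meas.aestronglyMeasurable, (hasFiniteIntegral_iff_ofReal hVq_nn).2 ?_⟩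
    rw [lintegral_eq_lintegral_meas_lt ℙ hVq_nn hVq_meas.aemeasurable]
    have hT₁q : (0:ℝ) < T₁ ^ q := Real.rpow_pos_of_pos hT₁pos q
    have hsplit : Ioi (0:ℝ) = Ioc 0 (T₁ ^ q) ∪ Ioi (T₁ ^ q) := (Ioc_union_Ioi_eq_Ioi hT₁q.le).symm
    rw [hsplit, lintegral_union measurableSet_Ioi (Ioc_disjoint_Ioi le_rfl)]
    have h1 : ∫⁻ t in Ioc (0:ℝ) (T₁^q), ℙ {a | t < V a ^ q} ≤ ENNReal.ofReal (T₁^q) := by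
      calc ∫⁻ t in Ioc (0:ℝ) (T₁^q), ℙ {a | t < V a ^ q}
          ≤ ∫⁻ _ in Ioc (0:ℝ) (T₁^q), 1 := setLIntegral_mono measurable_const (fun _ _ => prob_le_one)
        _ = ENNReal.ofReal (T₁^q) := by
            rw [setLIntegral_const, one_mul, Real.volume_Ioc, sub_zero]
    have h2 : ∫⁻ t in Ioi (T₁^q), ℙ {a | t < V a ^ q}
        ≤ ∫⁻ t in Ioi (T₁^q), ENNReal.ofReal (t ^ (-2:ℝ)) :=
      setLIntegral_mono (by measurability) (fun t (htt : T₁^q < t) => htail t htt.le)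
    have h3 : ∫⁻ t in Ioi (T₁^q), ENNReal.ofReal (t ^ (-2:ℝ)) < ⊤ :=
      (integrableOn_Ioi_rpow_of_lt (by norm_num) hT₁q).lintegral_lt_top
    exact ENNReal.add_lt_top.2 ⟨lt_of_le_of_lt h1 (by simp), lt_of_le_of_lt h2 h3⟩
  refine ⟨hIntVq, ?_⟩
  -- Part C : the main limit
  set ν := Measure.map V ℙ with hνdef
  set μU := Measure.map U ℙ with hμUdef
  haveI hPν : IsProbabilityMeasure ν := Measure.isProbabilityMeasure_map hVmeas.aemeasurable
  haveI hPμU : IsProbabilityMeasure μU := Measure.isProbabilityMeasure_map hUmeas.aemeasurable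
  have hmap : Measure.map (fun ω => (U ω, V ω)) ℙ = μU.prod ν :=
    (indepFun_iff_map_prod_eq_prod_map_map hUmeas.aemeasurable hVmeas.aemeasurable).1 hInd
  have hst : ∀ t : ℝ, MeasurableSet {p : ℝ × ℝ | p.1 * p.2 > t} := fun t =>
    measurableSet_lt measurable_const (measurable_fst.mul measurable_snd)
  have hslice_meas : ∀ t : ℝ, Measurable fun v => μU {u | u * v > t} := fun t =>
    measurable_measure_prodMk_right (hst t)
  have hrep : ∀ t : ℝ, ℙ {ω | U ω * V ω > t} = ∫⁻ v, μU {u | u * v > t} ∂ν := by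
    intro t
    have h1 : {ω | U ω * V ω > t} = (fun ω => (U ω, V ω)) ⁻¹' {p : ℝ × ℝ | p.1 * p.2 > t} := rfl
    rw [h1, ← Measure.map_apply (hUmeas.prodMk hVmeas) (hst t), hmap,
      Measure.prod_apply_symm (hst t)]
    rfl
  have hofRealVq_meas : Measurable fun v : ℝ => ENNReal.ofReal (v ^ q) :=
    ENNReal.measurable_ofReal.comp (Real.continuous_rpow_const hq.le).measurable
  have hνVq : ∫⁻ v, ENNReal.ofReal (v ^ q) ∂ν = ∫⁻ ω, ENNReal.ofReal (V ω ^ q) ∂ℙ :=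
    lintegral_map hofRealVq_meas hVmeas
  have hfin : ∫⁻ ω, ENNReal.ofReal (V ω ^ q) ∂ℙ ≠ ⊤ :=
    ((hasFiniteIntegral_iff_ofReal hVq_nn).1 hIntVq.2).ne
  have hνnn : ∀ᵐ v ∂ν, 0 ≤ v := by
    exact (ae_map_iff (p := fun v : ℝ => 0 ≤ v) hVmeas.aemeasurable
      (measurableSet_le measurable_const measurable_id)).2 (Eventually.of_forall hVnn)
  have hGv : ∀ t > (0:ℝ), ∀ v > (0:ℝ),
      ENNReal.ofReal (t ^ q) * μU {u | u * v > t}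
        = ENNReal.ofReal (v ^ q * ((t/v) ^ q * (ℙ {ω | U ω > t/v}).toReal)) := by
    intro t ht v hv
    have hset : {u : ℝ | u * v > t} = {u : ℝ | u > t / v} := by
      ext u
      simp only [mem_setOf_eq, gt_iff_lt]
      exact (div_lt_iff₀ hv).symm
    have hμ : μU {u | u * v > t} = ℙ {ω | U ω > t / v} := by
      rw [hset, hμUdef, Measure.map_apply (s := {u : ℝ | u > t/v}) hUmeas
        (measurableSet_lt measurable_const measurable_id)]
      rfl
    rw [hμ, ← ENNReal.ofReal_toReal (measure_ne_top ℙ {ω | U ω > t/v}),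
      ← ENNReal.ofReal_mul (Real.rpow_nonneg ht.le q)]
    congr 1
    have hvq : v ^ q ≠ 0 := (Real.rpow_pos_of_pos hv q).ne'
    rw [← mul_assoc, Real.div_rpow ht.le hv.le]
    field_simp
    rw [ENNReal.toReal_ofReal (probNN _)]
  have hempty : ∀ t > (0:ℝ), {u : ℝ | u * 0 > t} = ∅ := by
    intro t ht
    ext u
    simp [ht.not_gt, mul_zero]
  have hbound_int : ∫⁻ v, ENNReal.ofReal (M * v ^ q) ∂ν ≠ ⊤ := by
    have heq : ∀ v : ℝ, ENNReal.ofReal (M * v ^ q)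
        = ENNReal.ofReal M * ENNReal.ofReal (v ^ q) := fun v => ENNReal.ofReal_mul hM0.le
    simp_rw [heq]
    rw [lintegral_const_mul _ hofRealVq_meas, hνVq]
    exact ENNReal.mul_ne_top ENNReal.ofReal_ne_top hfin
  have hDCT : Tendsto (fun t => ∫⁻ v, ENNReal.ofReal (t ^ q) * μU {u | u * v > t} ∂ν) atTop
      (nhds (∫⁻ v, ENNReal.ofReal (C * v ^ q) ∂ν)) := by
    refine tendsto_lintegral_filter_of_dominated_convergence
      (fun v => ENNReal.ofReal (M * v ^ q))
      (Eventually.of_forall fun t => measurable_const.mul (hslice_meas t)) ?_ hbound_int ?_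
    · filter_upwards [eventually_gt_atTop 0] with t ht
      filter_upwards [hνnn] with v hv
      rcases eq_or_lt_of_le hv with hv0 | hv0
      · rw [← hv0, hempty t ht]
        simp
      · rw [hGv t ht v hv0]
        refine ENNReal.ofReal_le_ofReal ?_
        rw [mul_comm M (v ^ q)]
        exact mul_le_mul_of_nonneg_left (hM (t/v) (div_pos ht hv0)) (Real.rpow_nonneg hv q)
    · filter_upwards [hνnn] with v hv
      rcases eq_or_lt_of_le hv with hv0 | hv0
      · have hlim : ENNReal.ofReal (C * v ^ q) = 0 := by
          rw [← hv0, Real.zero_rpow hq.ne', mul_zero, ENNReal.ofReal_zero]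
        rw [hlim]
        refine Tendsto.congr' ?_ tendsto_const_nhds
        filter_upwards [eventually_gt_atTop 0] with t ht
        rw [← hv0, hempty t ht]
        simp
      · have h1 : Tendsto (fun t => (t/v) ^ q * (ℙ {ω | U ω > t/v}).toReal) atTop (nhds C) :=
          hU.comp (tendsto_id.atTop_div_const hv0)
        have h2 : Tendsto (fun t => v ^ q * ((t/v) ^ q * (ℙ {ω | U ω > t/v}).toReal)) atTop
            (nhds (v ^ q * C)) := h1.const_mul _
        have h3 : Tendsto
            (fun t => ENNReal.ofReal (v ^ q * ((t/v) ^ q * (ℙ {ω | U ω > t/v}).toReal))) atTop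
            (nhds (ENNReal.ofReal (v ^ q * C))) := (ENNReal.continuous_ofReal.tendsto _).comp h2
        rw [mul_comm C (v ^ q)]
        refine Tendsto.congr' ?_ h3
        filter_upwards [eventually_gt_atTop 0] with t ht
        exact (hGv t ht v hv0).symm
  have hLval : ∫⁻ v, ENNReal.ofReal (C * v ^ q) ∂ν = ENNReal.ofReal (C * ∫ ω, V ω ^ q) := by
    have heq : ∀ v : ℝ, ENNReal.ofReal (C * v ^ q)
        = ENNReal.ofReal C * ENNReal.ofReal (v ^ q) := fun v => ENNReal.ofReal_mul hC.le
    simp_rw [heq]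
    rw [lintegral_const_mul _ hofRealVq_meas, hνVq,
      ← ofReal_integral_eq_lintegral_ofReal hIntVq hVq_nn, ← ENNReal.ofReal_mul hC.le]
  have hfinL : ∫⁻ v, ENNReal.ofReal (C * v ^ q) ∂ν ≠ ⊤ := by
    rw [hLval]; exact ENNReal.ofReal_ne_top
  have htoReal := (ENNReal.tendsto_toReal hfinL).comp hDCT
  have hIntNN : 0 ≤ ∫ ω, V ω ^ q := integral_nonneg fun ω => Real.rpow_nonneg (hVnn ω) q
  have hlimval : (∫⁻ v, ENNReal.ofReal (C * v ^ q) ∂ν).toReal = C * ∫ ω, V ω ^ q := by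
    rw [hLval, ENNReal.toReal_ofReal (by positivity)]
  rw [hlimval] at htoReal
  refine Tendsto.congr' ?_ htoReal
  filter_upwards [eventually_gt_atTop 0] with t ht
  show (∫⁻ v, ENNReal.ofReal (t ^ q) * μU {u | u * v > t} ∂ν).toReal
      = t ^ q * (ℙ {ω | U ω * V ω > t}).toReal
  rw [lintegral_const_mul _ (hslice_meas t), ← hrep t, ENNReal.toReal_mul,
    ENNReal.toReal_ofReal (Real.rpow_nonneg ht.le q)]
end

section
/- Let U and V be nonnegative real-valued random variables defined on the same probability space and let q > 0. Then ∫₀^∞ |P(U > t) − P(V > t)| · t^{q−1} dt ≤ (1/q) · E[|U^q − V^q|]. -/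
open MeasureTheory ProbabilityTheory Filter
open scoped ENNReal

lemma aux_lintegral_rpow {a b q : ℝ} (ha : 0 ≤ a) (hab : a ≤ b) (hq : 0 < q) :
    ∫⁻ t in Set.Ioo a b, ENNReal.ofReal (t ^ (q - 1)) =
      ENNReal.ofReal ((b ^ q - a ^ q) / q) := by
  have hr : (-1 : ℝ) < q - 1 := by linarith
  have hint : IntegrableOn (fun t : ℝ => t ^ (q - 1)) (Set.Ioo a b) volume := by
    have h := intervalIntegral.intervalIntegrable_rpow' hr (a := a) (b := b)
    rw [intervalIntegrable_iff, Set.uIoc_of_le hab] at h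
    exact h.mono_set Set.Ioo_subset_Ioc_self
  have hnn : 0 ≤ᵐ[volume.restrict (Set.Ioo a b)] fun t : ℝ => t ^ (q - 1) := by
    filter_upwards [ae_restrict_mem measurableSet_Ioo] with t ht
    exact Real.rpow_nonneg (le_of_lt (lt_of_le_of_lt ha ht.1)) _
  rw [← ofReal_integral_eq_lintegral_ofReal hint hnn]
  congr 1
  rw [← integral_Ioc_eq_integral_Ioo, ← intervalIntegral.integral_of_le hab,
    integral_rpow (Or.inl hr)]
  norm_num

/-- For nonnegative random variables `U, V` on a common probability space
and `q > 0`, `∫₀^∞ |P(U > t) − P(V > t)| · t^{q−1} dt ≤ (1/q) · E[|U^q − V^q|]`,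
where the right-hand side is allowed to be `+∞` (both sides are taken in `ℝ≥0∞`). -/
theorem stmt_7 {Ω : Type*} [MeasureSpace Ω] [IsProbabilityMeasure (ℙ : Measure Ω)]
    (U V : Ω → ℝ) (hUmeas : Measurable U) (hVmeas : Measurable V)
    (hUnn : ∀ ω, 0 ≤ U ω) (hVnn : ∀ ω, 0 ≤ V ω)
    (q : ℝ) (hq : 0 < q) :
    (∫⁻ t in Set.Ioi (0:ℝ),
        ENNReal.ofReal
          (|(ℙ {ω | U ω > t}).toReal - (ℙ {ω | V ω > t}).toReal| * t ^ (q - 1))) ≤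
      ENNReal.ofReal (1 / q) * ∫⁻ ω, ENNReal.ofReal |U ω ^ q - V ω ^ q| := by
  set m : Ω → ℝ := fun ω => min (U ω) (V ω) with hm
  set M : Ω → ℝ := fun ω => max (U ω) (V ω) with hM
  have hmmeas : Measurable m := hUmeas.min hVmeas
  have hMmeas : Measurable M := hUmeas.max hVmeas
  have hmnn : ∀ ω, 0 ≤ m ω := fun ω => le_min (hUnn ω) (hVnn ω)
  have hmM : ∀ ω, m ω ≤ M ω := fun ω => min_le_max
  set f : ℝ → Ω → ℝ≥0∞ := fun t ω =>
    if m ω ≤ t ∧ t < M ω then ENNReal.ofReal (t ^ (q - 1)) else 0 with hf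
  -- measurability of the uncurried function
  have hset : MeasurableSet {p : ℝ × Ω | m p.2 ≤ p.1 ∧ p.1 < M p.2} := by
    exact (measurableSet_le (hmmeas.comp measurable_snd) measurable_fst).inter
      (measurableSet_lt measurable_fst (hMmeas.comp measurable_snd))
  have hfmeas : Measurable (fun p : ℝ × Ω => f p.1 p.2) := by
    apply Measurable.ite hset
    · exact (measurable_fst.pow_const _).ennreal_ofReal
    · exact measurable_const
  -- Step A : pointwise bound
  have stepA : ∀ t ∈ Set.Ioi (0:ℝ),
      ENNReal.ofReal
        (|(ℙ {ω | U ω > t}).toReal - (ℙ {ω | V ω > t}).toReal| * t ^ (q - 1)) ≤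
      ∫⁻ ω, f t ω ∂ℙ := by
    intro t _
    have hS : MeasurableSet {ω | m ω ≤ t ∧ t < M ω} :=
      (measurableSet_le hmmeas measurable_const).inter
        (measurableSet_lt measurable_const hMmeas)
    have hfi : (fun ω => f t ω) =
        Set.indicator {ω | m ω ≤ t ∧ t < M ω}
          (fun _ => ENNReal.ofReal (t ^ (q - 1))) := by
      funext ω; simp [hf, Set.indicator_apply]
    rw [hfi, lintegral_indicator_const hS, ENNReal.ofReal_mul (abs_nonneg _), mul_comm]
    gcongr
    -- |P(U>t) - P(V>t)| ≤ P(S)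
    have hsub : ∀ (A B : Ω → ℝ), (∀ ω, 0 ≤ A ω) → (∀ ω, 0 ≤ B ω) →
        M = (fun ω => max (A ω) (B ω)) → m = (fun ω => min (A ω) (B ω)) →
        ℙ {ω | A ω > t} ≤ ℙ {ω | B ω > t} + ℙ {ω | m ω ≤ t ∧ t < M ω} := by
      intro A B _ _ hMe hme
      refine (measure_mono ?_).trans (measure_union_le _ _)
      intro ω hω
      by_cases hB : B ω > t
      · exact Or.inl hB
      · right
        constructor
        · rw [hme]; exact min_le_of_right_le (not_lt.mp hB)
        · rw [hMe]; exact lt_max_of_lt_left hω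
    have h1 := hsub U V hUnn hVnn rfl rfl
    have h2 := hsub V U hVnn hUnn (by simp [hM, max_comm]) (by simp [hm, min_comm])
    refine ENNReal.ofReal_le_of_le_toReal ?_
    rw [abs_sub_le_iff]
    constructor
    · have := ENNReal.toReal_mono (by finiteness) h1
      rw [ENNReal.toReal_add (by finiteness) (by finiteness)] at this
      linarith
    · have := ENNReal.toReal_mono (by finiteness) h2
      rw [ENNReal.toReal_add (by finiteness) (by finiteness)] at this
      linarith
  calc
    (∫⁻ t in Set.Ioi (0:ℝ),
        ENNReal.ofReal
          (|(ℙ {ω | U ω > t}).toReal - (ℙ {ω | V ω > t}).toReal| * t ^ (q - 1)))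
      ≤ ∫⁻ t in Set.Ioi (0:ℝ), ∫⁻ ω, f t ω ∂ℙ := by
        exact setLIntegral_mono' measurableSet_Ioi stepA
    _ = ∫⁻ ω, ∫⁻ t in Set.Ioi (0:ℝ), f t ω ∂volume ∂ℙ := by
        exact lintegral_lintegral_swap hfmeas.aemeasurable
    _ = ∫⁻ ω, ENNReal.ofReal (1 / q) * ENNReal.ofReal |U ω ^ q - V ω ^ q| ∂ℙ := by
        refine lintegral_congr fun ω => ?_
        have hfi : (fun t => f t ω) =
            Set.indicator (Set.Ico (m ω) (M ω))
              (fun t => ENNReal.ofReal (t ^ (q - 1))) := by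
          funext t; simp [hf, Set.indicator_apply, Set.mem_Ico]
        rw [hfi, lintegral_indicator measurableSet_Ico,
          Measure.restrict_restrict measurableSet_Ico]
        have hae : (Set.Ico (m ω) (M ω) ∩ Set.Ioi 0 : Set ℝ) =ᵐ[volume]
            (Set.Ioo (m ω) (M ω) : Set ℝ) := by
          refine MeasureTheory.ae_eq_set.mpr ⟨?_, ?_⟩
          · refine measure_mono_null (fun t ht => ?_) (measure_singleton (m ω))
            rcases ht with ⟨⟨⟨h1, h2⟩, _⟩, h4⟩
            have : ¬ (m ω < t) := fun h => h4 ⟨h, h2⟩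
            simp [le_antisymm (not_lt.mp this) h1]
          · refine measure_mono_null (fun t ht => ?_) (measure_empty (μ := volume))
            rcases ht with ⟨⟨h1, h2⟩, h4⟩
            exact absurd ⟨⟨le_of_lt h1, h2⟩, lt_of_le_of_lt (hmnn ω) h1⟩ h4
        rw [setLIntegral_congr hae, aux_lintegral_rpow (hmnn ω) (hmM ω) hq]
        have hMq : M ω ^ q = max (U ω ^ q) (V ω ^ q) := by
          rcases le_total (U ω) (V ω) with h | h
          · rw [hM]; simp only [max_eq_right h,
              max_eq_right (Real.rpow_le_rpow (hUnn ω) h hq.le)]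
          · rw [hM]; simp only [max_eq_left h,
              max_eq_left (Real.rpow_le_rpow (hVnn ω) h hq.le)]
        have hmq : m ω ^ q = min (U ω ^ q) (V ω ^ q) := by
          rcases le_total (U ω) (V ω) with h | h
          · rw [hm]; simp only [min_eq_left h,
              min_eq_left (Real.rpow_le_rpow (hUnn ω) h hq.le)]
          · rw [hm]; simp only [min_eq_right h,
              min_eq_right (Real.rpow_le_rpow (hVnn ω) h hq.le)]
        rw [hMq, hmq, max_sub_min_eq_abs, div_eq_mul_inv, mul_comm,
          ENNReal.ofReal_mul (by positivity), one_div, abs_sub_comm (V ω ^ q)]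
    _ = ENNReal.ofReal (1 / q) * ∫⁻ ω, ENNReal.ofReal |U ω ^ q - V ω ^ q| :=
        lintegral_const_mul' _ _ ENNReal.ofReal_ne_top
end

section
/- Let U and V be nonnegative real-valued random variables defined on the same probability space and let q > 0. If E[|U^q − V^q|] < ∞, then the function t ↦ (P(U > t) − P(V > t))·t^{q−1} is Lebesgue integrable on (0, ∞) and ∫₀^∞ (P(U > t) − P(V > t)) · t^{q−1} dt = (1/q) · E[U^q − V^q]. -/
open MeasureTheory ProbabilityTheory Filter Set

lemma key_le (q : ℝ) (hq : 0 < q) (a b : ℝ) (hb : 0 ≤ b) (hba : b ≤ a) :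
    IntegrableOn (fun t => ((if a > t then (1:ℝ) else 0) - (if b > t then 1 else 0)) * t ^ (q-1))
      (Ioi 0) ∧
    ∫ t in Ioi (0:ℝ), ((if a > t then (1:ℝ) else 0) - (if b > t then 1 else 0)) * t ^ (q-1)
      = (a ^ q - b ^ q) / q := by
  have ha : 0 ≤ a := hb.trans hba
  have heq : ∀ t ∈ Ioi (0:ℝ),
      ((if a > t then (1:ℝ) else 0) - (if b > t then 1 else 0)) * t ^ (q-1)
      = (Ico b a).indicator (fun t => t ^ (q-1)) t := by
    intro t _
    by_cases h1 : t < b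
    · simp [h1, h1.trans_le hba, Set.indicator_apply, not_le.2 h1]
    · by_cases h2 : t < a
      · simp [h1, h2, Set.indicator_apply, not_lt.1 h1]
      · simp [h1, h2, Set.indicator_apply]
  have hIoc : IntegrableOn (fun t => t ^ (q-1)) (Ioc b a) := by
    rw [← intervalIntegrable_iff_integrableOn_Ioc_of_le hba]
    exact intervalIntegral.intervalIntegrable_rpow' (by linarith)
  have hsetae : (Ioi (0:ℝ) ∩ Ico b a : Set ℝ) =ᵐ[volume] (Ioc b a : Set ℝ) := by
    rcases eq_or_lt_of_le hb with hb0 | hb0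
    · have : Ioi (0:ℝ) ∩ Ico b a = Ioo b a := by
        subst hb0; ext t; simp [Ioo, Ico, and_comm, lt_iff_lt_of_le_iff_le]
        exact fun h1 h2 => h1.le
      rw [this]; exact Ioo_ae_eq_Ioc
    · have : Ioi (0:ℝ) ∩ Ico b a = Ico b a := by
        apply inter_eq_self_of_subset_right
        intro t ht; exact hb0.trans_le ht.1
      rw [this]; exact Ico_ae_eq_Ioc
  have hind : IntegrableOn ((Ico b a).indicator (fun t => t ^ (q-1))) (Ioi 0) := by
    rw [IntegrableOn, integrable_indicator_iff measurableSet_Ico]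
    rw [IntegrableOn, Measure.restrict_restrict measurableSet_Ico]
    have hsetae' : (Ico b a ∩ Ioi 0 : Set ℝ) =ᵐ[volume] (Ioc b a : Set ℝ) := by
      rwa [Set.inter_comm]
    rw [Measure.restrict_congr_set hsetae']
    exact hIoc
  have hint : IntegrableOn (fun t => ((if a > t then (1:ℝ) else 0) - (if b > t then 1 else 0)) * t ^ (q-1)) (Ioi 0) := by
    exact hind.congr_fun (fun t ht => (heq t ht).symm) measurableSet_Ioi
  refine ⟨hint, ?_⟩
  rw [setIntegral_congr_fun measurableSet_Ioi heq]
  rw [setIntegral_indicator measurableSet_Ico]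
  rw [setIntegral_congr_set hsetae]
  rw [← intervalIntegral.integral_of_le hba, integral_rpow (Or.inl (by linarith))]
  rw [sub_add_cancel]

lemma key_gen (q : ℝ) (hq : 0 < q) (a b : ℝ) (ha : 0 ≤ a) (hb : 0 ≤ b) :
    IntegrableOn (fun t => ((if a > t then (1:ℝ) else 0) - (if b > t then 1 else 0)) * t ^ (q-1))
      (Ioi 0) ∧
    ∫ t in Ioi (0:ℝ), ((if a > t then (1:ℝ) else 0) - (if b > t then 1 else 0)) * t ^ (q-1)
      = (a ^ q - b ^ q) / q := by
  rcases le_total b a with h | h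
  · exact key_le q hq a b hb h
  · obtain ⟨h1, h2⟩ := key_le q hq b a ha h
    have hfe : (fun t => ((if a > t then (1:ℝ) else 0) - (if b > t then 1 else 0)) * t ^ (q-1))
        = fun t => -(((if b > t then (1:ℝ) else 0) - (if a > t then 1 else 0)) * t ^ (q-1)) := by
      funext t; ring
    rw [hfe]
    refine ⟨h1.neg, ?_⟩
    rw [integral_neg, h2]; ring

lemma abs_diff_ind (a b t : ℝ) :
    |(if a > t then (1:ℝ) else 0) - (if b > t then 1 else 0)|
      = (if max a b > t then (1:ℝ) else 0) - (if min a b > t then 1 else 0) := by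
  by_cases h1 : a > t <;> by_cases h2 : b > t <;>
    simp [h1, h2, lt_max_iff, lt_min_iff, abs_of_nonneg, abs_of_nonpos]

/-- For nonnegative random variables `U, V` on a common probability space
and `q > 0`, if `E[|U^q − V^q|] < ∞` then `t ↦ (P(U > t) − P(V > t))·t^{q−1}` is
Lebesgue integrable on `(0, ∞)` and
`∫₀^∞ (P(U > t) − P(V > t)) · t^{q−1} dt = (1/q) · E[U^q − V^q]`. -/
theorem stmt_8 {Ω : Type*} [MeasureSpace Ω] [IsProbabilityMeasure (ℙ : Measure Ω)]
    (U V : Ω → ℝ) (hUmeas : Measurable U) (hVmeas : Measurable V)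
    (hUnn : ∀ ω, 0 ≤ U ω) (hVnn : ∀ ω, 0 ≤ V ω)
    (q : ℝ) (hq : 0 < q)
    (hInt : Integrable (fun ω => U ω ^ q - V ω ^ q)) :
    IntegrableOn
      (fun t : ℝ => ((ℙ {ω | U ω > t}).toReal - (ℙ {ω | V ω > t}).toReal) * t ^ (q - 1))
      (Set.Ioi 0) ∧
    (∫ t in Set.Ioi (0:ℝ),
        ((ℙ {ω | U ω > t}).toReal - (ℙ {ω | V ω > t}).toReal) * t ^ (q - 1)) =
      (1 / q) * ∫ ω, (U ω ^ q - V ω ^ q) := by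
  set ν : Measure ℝ := volume.restrict (Ioi 0) with hν
  set F : Ω × ℝ → ℝ := fun p =>
    ((if U p.1 > p.2 then (1:ℝ) else 0) - (if V p.1 > p.2 then 1 else 0)) * p.2 ^ (q-1) with hF
  -- measurability
  have hmeasF : Measurable F := by
    apply Measurable.mul
    · apply Measurable.sub
      · exact Measurable.ite (measurableSet_lt measurable_snd (hUmeas.comp measurable_fst))
          measurable_const measurable_const
      · exact Measurable.ite (measurableSet_lt measurable_snd (hVmeas.comp measurable_fst))
          measurable_const measurable_const
    · exact measurable_snd.pow_const _
  -- per-ω integrability and values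
  have hslice : ∀ ω, Integrable (fun t => F (ω, t)) ν :=
    fun ω => (key_gen q hq (U ω) (V ω) (hUnn ω) (hVnn ω)).1
  have hsliceval : ∀ ω, ∫ t, F (ω, t) ∂ν = (U ω ^ q - V ω ^ q) / q :=
    fun ω => (key_gen q hq (U ω) (V ω) (hUnn ω) (hVnn ω)).2
  -- norm integral
  have hnormval : ∀ ω, ∫ t, ‖F (ω, t)‖ ∂ν = |U ω ^ q - V ω ^ q| / q := by
    intro ω
    have h1 : ∀ t ∈ Ioi (0:ℝ), ‖F (ω, t)‖
        = ((if max (U ω) (V ω) > t then (1:ℝ) else 0) - (if min (U ω) (V ω) > t then 1 else 0)) * t ^ (q-1) := by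
      intro t ht
      rw [hF]
      simp only [Real.norm_eq_abs, abs_mul, abs_diff_ind,
        abs_of_nonneg (Real.rpow_nonneg (le_of_lt ht) _)]
    rw [hν, setIntegral_congr_fun measurableSet_Ioi h1,
      (key_gen q hq _ _ (le_max_of_le_left (hUnn ω)) (le_min (hUnn ω) (hVnn ω))).2]
    congr 1
    rcases le_total (U ω) (V ω) with h | h
    · rw [max_eq_right h, min_eq_left h,
        abs_of_nonpos (by simpa using Real.rpow_le_rpow (hUnn ω) h hq.le)]
      ring
    · rw [max_eq_left h, min_eq_right h,
        abs_of_nonneg (by simpa using Real.rpow_le_rpow (hVnn ω) h hq.le)]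
  -- product integrability
  have hprod : Integrable F ((ℙ : Measure Ω).prod ν) := by
    rw [integrable_prod_iff hmeasF.aestronglyMeasurable]
    refine ⟨ae_of_all _ hslice, ?_⟩
    have : (fun ω => ∫ t, ‖F (ω, t)‖ ∂ν) = fun ω => |U ω ^ q - V ω ^ q| / q :=
      funext hnormval
    rw [this]
    exact hInt.abs.div_const q
  -- inner integral over ω
  have hinner : ∀ t : ℝ, ∫ ω, F (ω, t) ∂(ℙ : Measure Ω)
      = ((ℙ {ω | U ω > t}).toReal - (ℙ {ω | V ω > t}).toReal) * t ^ (q - 1) := by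
    intro t
    have hU : (fun ω => if U ω > t then (1:ℝ) else 0) = ({ω | U ω > t} : Set Ω).indicator 1 := by
      funext ω; simp [Set.indicator_apply]
    have hV : (fun ω => if V ω > t then (1:ℝ) else 0) = ({ω | V ω > t} : Set Ω).indicator 1 := by
      funext ω; simp [Set.indicator_apply]
    have hUm : MeasurableSet {ω | U ω > t} := hUmeas measurableSet_Ioi
    have hVm : MeasurableSet {ω | V ω > t} := hVmeas measurableSet_Ioi
    calc ∫ ω, F (ω, t) ∂(ℙ : Measure Ω)
        = (∫ ω, ((if U ω > t then (1:ℝ) else 0) - (if V ω > t then 1 else 0)) ∂(ℙ : Measure Ω)) * t ^ (q-1) := by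
          rw [hF]
          exact integral_mul_const (t ^ (q-1)) (fun ω => ((if U ω > t then (1:ℝ) else 0) - (if V ω > t then 1 else 0)))
      _ = ((ℙ {ω | U ω > t}).toReal - (ℙ {ω | V ω > t}).toReal) * t ^ (q - 1) := by
          rw [integral_sub, hU, hV, integral_indicator_one hUm, integral_indicator_one hVm]
          · rfl
          · rw [hU]; exact (integrable_const (1:ℝ)).indicator hUm
          · rw [hV]; exact (integrable_const (1:ℝ)).indicator hVm
  constructor
  · have := hprod.integral_prod_right
    have he : (fun t => ∫ ω, F (ω, t) ∂(ℙ : Measure Ω))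
        = fun t : ℝ => ((ℙ {ω | U ω > t}).toReal - (ℙ {ω | V ω > t}).toReal) * t ^ (q - 1) :=
      funext hinner
    rwa [he] at this
  · have hswap : ∫ t, ∫ ω, F (ω, t) ∂(ℙ : Measure Ω) ∂ν
        = ∫ ω, ∫ t, F (ω, t) ∂ν ∂(ℙ : Measure Ω) := by
      exact (integral_integral_swap (by exact hprod)).symm
    have h1 : (∫ t in Set.Ioi (0:ℝ),
        ((ℙ {ω | U ω > t}).toReal - (ℙ {ω | V ω > t}).toReal) * t ^ (q - 1))
        = ∫ t, ∫ ω, F (ω, t) ∂(ℙ : Measure Ω) ∂ν := by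
      rw [hν]; exact (setIntegral_congr_fun measurableSet_Ioi (fun t _ => (hinner t).symm))
    rw [h1, hswap]
    have h2 : (fun ω => ∫ t, F (ω, t) ∂ν) = fun ω => (U ω ^ q - V ω ^ q) / q :=
      funext hsliceval
    rw [h2]
    rw [integral_div]
    ring
end
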